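/- arXiv:1803.08257 — 2 statements merged into one kernel-verified Lean document; each statement's English description precedes it below -/
import Mathlib

section
/- Let B be a C*-algebra and P ⊆ B a C*-subalgebra. If a ∈ P and b ∈ B satisfy 0 ≤ b ≤ a, then b belongs to the closure of the linear span of P·B·P, i.e., b ∈ closure(P·B·P). -/
/-!
The elements `eₜ = min (t a) 1` of `P`, obtained by functional calculus, are self-adjoint
contractions with `‖a - eₜ a‖ ≤ 1/t`. Writing `b = z* z` and `(1 - e) x (1 - e)` for
`x - e x - x e + e x e`, positivity of this compression gives
`‖z - z e‖² = ‖(1 - e) b (1 - e)‖ ≤ ‖(1 - e) a (1 - e)‖ ≤ 2 ‖a - e a‖`, and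
`b - e b e = z* (z - z e) + (z - z e)* z e` is then small, so `eₜ b eₜ ∈ P B P` tends to `b`.
-/

open Filter Topology

section StarOrderedRing

variable {R : Type*} [NonUnitalRing R] [StarRing R] [PartialOrder R] [StarOrderedRing R]

lemma sub_mul_sub_mul_add_mul_mul_nonneg {e x : R} (he : IsSelfAdjoint e) (hx : 0 ≤ x) :
    0 ≤ x - e * x - x * e + e * x * e := by
  rw [StarOrderedRing.nonneg_iff] at hx
  induction hx using AddSubmonoid.closure_induction with
  | mem _ hx =>
    obtain ⟨s, rfl⟩ := hx
    convert star_mul_self_nonneg (s - s * e) using 1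
    simp only [star_sub, star_mul, he.star_eq]
    noncomm_ring
  | zero => simp
  | add x y _ _ hx hy =>
    convert add_nonneg hx hy using 1
    noncomm_ring

end StarOrderedRing

lemma norm_star_mul_self_sub_mul_mul_le {A : Type*} [NonUnitalNormedRing A] [StarRing A]
    [NormedStarGroup A] {e : A} (z : A) (he : IsSelfAdjoint e) (he₁ : ‖e‖ ≤ 1) :
    ‖star z * z - e * (star z * z) * e‖ ≤ 2 * ‖z‖ * ‖z - z * e‖ := by
  have hdecomp : star z * z - e * (star z * z) * e =
      star z * (z - z * e) + star (z - z * e) * z * e := by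
    simp only [star_sub, star_mul, he.star_eq]
    noncomm_ring
  calc _ ≤ ‖star z‖ * ‖z - z * e‖ + ‖star (z - z * e)‖ * ‖z‖ * ‖e‖ := by
        rw [hdecomp]
        refine (norm_add_le _ _).trans (add_le_add (norm_mul_le _ _) ?_)
        exact (norm_mul_le _ _).trans (by gcongr; exact norm_mul_le _ _)
    _ ≤ ‖z‖ * ‖z - z * e‖ + ‖z - z * e‖ * ‖z‖ * 1 := by
        rw [norm_star, norm_star]
        gcongr
    _ = 2 * ‖z‖ * ‖z - z * e‖ := by ring

section CStarAlgebra

variable {A : Type*} [NonUnitalCStarAlgebra A] [PartialOrder A] [StarOrderedRing A]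

lemma norm_sub_mul_sq_le_of_star_mul_self_le {e z a : A} (he : IsSelfAdjoint e) (he₁ : ‖e‖ ≤ 1)
    (hza : star z * z ≤ a) : ‖z - z * e‖ ^ 2 ≤ 2 * ‖a - e * a‖ := by
  have hle : star (z - z * e) * (z - z * e) ≤ a - e * a - (a - e * a) * e := by
    rw [← sub_nonneg]
    convert sub_mul_sub_mul_add_mul_mul_nonneg he (sub_nonneg.mpr hza) using 1
    simp only [star_sub, star_mul, he.star_eq]
    noncomm_ring
  calc ‖z - z * e‖ ^ 2 = ‖star (z - z * e) * (z - z * e)‖ := by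
        rw [CStarRing.norm_star_mul_self, sq]
    _ ≤ ‖a - e * a - (a - e * a) * e‖ :=
        CStarAlgebra.norm_le_norm_of_nonneg_of_le (star_mul_self_nonneg _) hle
    _ ≤ ‖a - e * a‖ + ‖a - e * a‖ * ‖e‖ :=
        (norm_sub_le _ _).trans (by gcongr; exact norm_mul_le _ _)
    _ ≤ 2 * ‖a - e * a‖ := by nlinarith [norm_nonneg (a - e * a)]

lemma tendsto_mul_mul_self_of_le {ι : Type*} {l : Filter ι} {e : ι → A} {a b : A}
    (he : ∀ᶠ i in l, IsSelfAdjoint (e i)) (he₁ : ∀ᶠ i in l, ‖e i‖ ≤ 1)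
    (hea : Tendsto (fun i ↦ e i * a) l (𝓝 a)) (hb : 0 ≤ b) (hba : b ≤ a) :
    Tendsto (fun i ↦ e i * b * e i) l (𝓝 b) := by
  set z := CFC.sqrt b
  have hzz : star z * z = b := by
    rw [(CFC.sqrt_nonneg b).isSelfAdjoint.star_eq, CFC.sqrt_mul_sqrt_self b hb]
  have hbound : ∀ᶠ i in l, ‖e i * b * e i - b‖ ≤ 2 * ‖z‖ * √(2 * ‖a - e i * a‖) := by
    filter_upwards [he, he₁] with i hei hei₁
    rw [norm_sub_rev, ← hzz]
    refine (norm_star_mul_self_sub_mul_mul_le z hei hei₁).trans ?_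
    gcongr
    exact Real.le_sqrt_of_sq_le (norm_sub_mul_sq_le_of_star_mul_self_le hei hei₁ (hzz ▸ hba))
  have hlim : Tendsto (fun i ↦ 2 * ‖z‖ * √(2 * ‖a - e i * a‖)) l (𝓝 0) := by
    have := ((tendsto_iff_norm_sub_tendsto_zero.mp hea).const_mul 2).sqrt.const_mul (2 * ‖z‖)
    simpa [norm_sub_rev] using this
  exact tendsto_iff_norm_sub_tendsto_zero.mpr
    (squeeze_zero' (.of_forall fun _ ↦ norm_nonneg _) hbound hlim)

lemma norm_cfcₙ_min_mul_one_le {a : A} (ha : 0 ≤ a) {t : ℝ} (ht : 0 ≤ t) :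
    ‖cfcₙ (fun y ↦ min (t * y) 1) a‖ ≤ 1 := by
  refine norm_cfcₙ_le fun y hy ↦ ?_
  have hy₀ := quasispectrum_nonneg_of_nonneg a ha y hy
  rw [Real.norm_of_nonneg (le_min (by positivity) zero_le_one)]
  exact min_le_right _ _

lemma norm_sub_cfcₙ_min_mul_one_mul_le {a : A} (ha : 0 ≤ a) {t : ℝ} (ht : 0 < t) :
    ‖a - cfcₙ (fun y ↦ min (t * y) 1) a * a‖ ≤ t⁻¹ := by
  have hcfc : a - cfcₙ (fun y ↦ min (t * y) 1) a * a =
      cfcₙ (fun y ↦ y - min (t * y) 1 * y) a := by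
    rw [cfcₙ_sub _ _ a, cfcₙ_mul _ _ a, cfcₙ_id' ℝ a]
  rw [hcfc]
  refine norm_cfcₙ_le fun y hy ↦ ?_
  have hy₀ := quasispectrum_nonneg_of_nonneg a ha y hy
  rcases le_total (t * y) 1 with hty | hty
  · rw [min_eq_left hty, Real.norm_of_nonneg (by nlinarith)]
    have hyt : y ≤ t⁻¹ := by rwa [← one_div, le_div_iff₀' ht]
    nlinarith [mul_nonneg (mul_nonneg ht.le hy₀) hy₀]
  · rw [min_eq_right hty, one_mul, sub_self, norm_zero]
    positivity

lemma tendsto_cfcₙ_min_mul_one_mul {a : A} (ha : 0 ≤ a) :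
    Tendsto (fun t : ℝ ↦ cfcₙ (fun y ↦ min (t * y) 1) a * a) atTop (𝓝 a) := by
  refine tendsto_iff_norm_sub_tendsto_zero.mpr
    (squeeze_zero' (.of_forall fun _ ↦ norm_nonneg _) ?_ tendsto_inv_atTop_zero)
  filter_upwards [eventually_gt_atTop 0] with t ht
  rw [norm_sub_rev]
  exact norm_sub_cfcₙ_min_mul_one_mul_le ha ht

end CStarAlgebra

/-- If `P` is a C⋆-subalgebra of a C⋆-algebra `B`, `a ∈ P`, `b ∈ B` and `0 ≤ b ≤ a`, then
`b` lies in the norm closure of the linear span of `P·B·P`. -/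
theorem mem_closure_span_of_le {B : Type*} [NonUnitalCStarAlgebra B] [PartialOrder B]
    [StarOrderedRing B]
    (P : NonUnitalStarSubalgebra ℂ B) (hPclosed : IsClosed (P : Set B))
    (a b : B) (ha : a ∈ P) (hb : 0 ≤ b) (hba : b ≤ a) :
    b ∈ closure (Submodule.span ℂ
      {z : B | ∃ p ∈ P, ∃ x : B, ∃ q ∈ P, z = p * x * q} : Set B) := by
  have ha₀ : 0 ≤ a := hb.trans hba
  have he_mem (t : ℝ) : cfcₙ (fun y ↦ min (t * y) 1) a ∈ P := cfcₙ_mem (hs := hPclosed) _ ha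
  have he₁ : ∀ᶠ t : ℝ in atTop, ‖cfcₙ (fun y ↦ min (t * y) 1) a‖ ≤ 1 := by
    filter_upwards [eventually_ge_atTop 0] with t ht using norm_cfcₙ_min_mul_one_le ha₀ ht
  have htendsto := tendsto_mul_mul_self_of_le (.of_forall fun _ ↦ cfcₙ_predicate _ a) he₁
    (tendsto_cfcₙ_min_mul_one_mul ha₀) hb hba
  exact mem_closure_of_tendsto htendsto
    (.of_forall fun t ↦ Submodule.subset_span ⟨_, he_mem t, b, _, he_mem t, rfl⟩)
end

section
/- Let A be a σ-unital simple C*-algebra and let α : G → Aut(A) be an action of a finite group G on A. If α has the Rokhlin property in the sense of Nawata, then the canonical conditional expectation E : A → A^α onto the fixed point algebra, defined by E(x) = (1/|G|) Σ_{g∈G} α_g(x), has the Rokhlin property. -/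
open scoped BoundedContinuousFunction
open Filter Topology

/-- An element of a `*`-algebra is *positive* when it is of the form `star y * y`.
In a C⋆-algebra this describes exactly the usual cone of positive elements. -/
def IsPositiveElem {B : Type*} [Mul B] [Star B] (x : B) : Prop := ∃ y, x = star y * y

/-- A C⋆-algebra is *σ-unital* when it contains a strictly positive element, i.e. a positive
element `h` such that `h·B` is dense. -/
def IsSigmaUnital (B : Type*) [NonUnitalCStarAlgebra B] : Prop :=
  ∃ h : B, IsPositiveElem h ∧ closure {z : B | ∃ x : B, z = h * x} = Set.univ

/-- A C⋆-algebra is *simple* when it is nonzero and has no closed two-sided ideals besides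
`⊥` and `⊤`. -/
def IsSimpleCStarAlgebra (B : Type*) [NonUnitalNonAssocRing B] [TopologicalSpace B] : Prop :=
  (∃ b : B, b ≠ 0) ∧ ∀ I : TwoSidedIdeal B, IsClosed (I : Set B) → I = ⊥ ∨ I = ⊤

section SeqAlgebra

variable {A : Type*} [NonUnitalCStarAlgebra A] {Ainf : Type*} [NonUnitalCStarAlgebra Ainf]

/-- `π : ℓ∞(ℕ, A) → Ainf` presents `Ainf` as the sequence algebra
`A^∞ = ℓ∞(ℕ,A)/c₀(ℕ,A)`: it is a surjective `*`-homomorphism whose kernel is exactly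
`c₀(ℕ,A)`, the ideal of sequences tending to `0` in norm. -/
def IsSequenceAlgebra (π : (ℕ →ᵇ A) →⋆ₙₐ[ℂ] Ainf) : Prop :=
  Function.Surjective π ∧ ∀ f : ℕ →ᵇ A, π f = 0 ↔ Tendsto (fun n => f n) atTop (𝓝 0)

/-- The canonical embedding `A → A^∞` by classes of constant sequences. -/
noncomputable def seqConst (π : (ℕ →ᵇ A) →⋆ₙₐ[ℂ] Ainf) (a : A) : Ainf :=
  π (BoundedContinuousFunction.const ℕ a)

/-- `D(A, A^∞)`, the norm-closed linear span of `A·A^∞·A` inside `A^∞`. -/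
def seqD (π : (ℕ →ᵇ A) →⋆ₙₐ[ℂ] Ainf) : Set Ainf :=
  closure (Submodule.span ℂ
    {z : Ainf | ∃ (a b : A) (x : Ainf), z = seqConst π a * x * seqConst π b} : Set Ainf)

/-- The copy `S^∞ ⊆ A^∞` of the sequence algebra of a subset `S ⊆ A`: classes of bounded
sequences taking values in `S`. -/
def seqSub (π : (ℕ →ᵇ A) →⋆ₙₐ[ℂ] Ainf) (S : Set A) : Set Ainf :=
  {x : Ainf | ∃ f : ℕ →ᵇ A, (∀ n, f n ∈ S) ∧ π f = x}

end SeqAlgebra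

section CondExp

variable {A : Type*} [NonUnitalCStarAlgebra A] {P : Type*} [NonUnitalCStarAlgebra P]
  {Ainf : Type*} [NonUnitalCStarAlgebra Ainf]

/-- `E : A → P` is a conditional expectation for the inclusion `incl : P ↪ A`: a positive
contractive linear map which restricts to the identity on `P` and is a `P`-bimodule map. -/
def IsCondExp (incl : P →⋆ₙₐ[ℂ] A) (E : A →ₗ[ℂ] P) : Prop :=
  (∀ p : P, E (incl p) = p) ∧
  (∀ (p q : P) (x : A), E (incl p * x * incl q) = p * E x * q) ∧
  (∀ x : A, IsPositiveElem x → IsPositiveElem (E x)) ∧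
  (∀ x : A, ‖E x‖ ≤ ‖x‖)

/-- `E` has finite index in the sense of Izumi: `(1/λ)·E - Id` is a positive map
for some `λ > 0`. -/
def IsFiniteIndex (incl : P →⋆ₙₐ[ℂ] A) (E : A →ₗ[ℂ] P) : Prop :=
  ∃ l : ℝ, 0 < l ∧ ∀ x : A, IsPositiveElem x → IsPositiveElem (l⁻¹ • incl (E x) - x)

/-- `Einf : A^∞ → A^∞` is the coordinatewise extension of the conditional expectation `E`. -/
def IsInducedCondExp (π : (ℕ →ᵇ A) →⋆ₙₐ[ℂ] Ainf) (incl : P →⋆ₙₐ[ℂ] A) (E : A →ₗ[ℂ] P)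
    (Einf : Ainf → Ainf) : Prop :=
  ∀ f g : ℕ →ᵇ A, (∀ n, g n = incl (E (f n))) → Einf (π f) = π g

/-- `e` is a Rokhlin element for the conditional expectation `E`, where the scalar `c`
plays the role of the Izumi–Watatani index `Index_w E = Ê**(1)` (a positive scalar when `A`
is simple and the index is finite).  The requirements are that `e` is a positive contraction
in the relative commutant `A' ∩ A^∞` such that:
(i) the class `[e]` of `e` in `N(D(A,A^∞),A^∞)/Ann(D(A,A^∞),A^∞)` is a projection
    (equivalently, `e*e - e` annihilates `D(A,A^∞)`, as `e` is already positive);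
(ii) `(Index_w E)·[E^∞(e)] = 1`, i.e. `c • Einf e` acts as the identity on `D(A,A^∞)`
    modulo the annihilator;
(iii) the map `A ∋ x ↦ [x·e]` is injective. -/
def IsRokhlinElement (π : (ℕ →ᵇ A) →⋆ₙₐ[ℂ] Ainf) (Einf : Ainf → Ainf) (c : ℝ) (e : Ainf) :
    Prop :=
  IsPositiveElem e ∧ ‖e‖ ≤ 1 ∧
  (∀ a : A, e * seqConst π a = seqConst π a * e) ∧
  (∀ d ∈ seqD π, (e * e - e) * d = 0 ∧ d * (e * e - e) = 0) ∧
  (∀ d ∈ seqD π, (c • Einf e) * d = d ∧ d * (c • Einf e) = d) ∧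
  (∀ x y : A, (∀ d ∈ seqD π,
      (seqConst π x * e - seqConst π y * e) * d = 0 ∧
      d * (seqConst π x * e - seqConst π y * e) = 0) → x = y)

/-- The Rokhlin property for a conditional expectation of finite index: there is a Rokhlin
element for it, where the scalar is the Izumi–Watatani index of `E`. -/
def HasRokhlinProperty (π : (ℕ →ᵇ A) →⋆ₙₐ[ℂ] Ainf) (Einf : Ainf → Ainf) : Prop :=
  ∃ c : ℝ, 0 < c ∧ ∃ e : Ainf, IsRokhlinElement π Einf c e

end CondExp

section Action

variable {G : Type*} [Group G] [Fintype G] {A : Type*} [NonUnitalCStarAlgebra A]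
  {Ainf : Type*} [NonUnitalCStarAlgebra Ainf]

/-- `αinf` is the coordinatewise extension to the sequence algebra `A^∞` of the action `α`. -/
def IsInducedAction (π : (ℕ →ᵇ A) →⋆ₙₐ[ℂ] Ainf) (α : G → A ≃⋆ₐ[ℂ] A)
    (αinf : G → Ainf → Ainf) : Prop :=
  ∀ (g : G) (f h : ℕ →ᵇ A), (∀ n, h n = α g (f n)) → αinf g (π f) = π h

/-- Nawata's Rokhlin property for an action `α` of a finite group `G` on a σ-unital
C⋆-algebra `A`: there is a partition of unity `{e_g}` consisting of projections in
`(A' ∩ A^∞)/Ann(A,A^∞)` with `α_g(e_h) = e_{gh}`.  Here `e : G → A^∞` is a lift of the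
family of projections; all identities defining projections, the partition of unity and the
equivariance hold modulo `Ann(A,A^∞)`, i.e. after multiplying by (constant sequences from)
`A` on either side. -/
def NawataRokhlin (π : (ℕ →ᵇ A) →⋆ₙₐ[ℂ] Ainf) (α : G → A ≃⋆ₐ[ℂ] A)
    (αinf : G → Ainf → Ainf) : Prop :=
  ∃ e : G → Ainf,
    (∀ g : G, ∀ a : A, e g * seqConst π a = seqConst π a * e g) ∧
    (∀ g : G, ∀ a : A, (star (e g) - e g) * seqConst π a = 0 ∧
        seqConst π a * (star (e g) - e g) = 0) ∧
    (∀ g : G, ∀ a : A, (e g * e g - e g) * seqConst π a = 0 ∧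
        seqConst π a * (e g * e g - e g) = 0) ∧
    (∀ a : A, (∑ g : G, e g) * seqConst π a = seqConst π a ∧
        seqConst π a * (∑ g : G, e g) = seqConst π a) ∧
    (∀ g h : G, ∀ a : A, (αinf g (e h) - e (g * h)) * seqConst π a = 0 ∧
        seqConst π a * (αinf g (e h) - e (g * h)) = 0)

end Action

section AuxLemmas

variable {A : Type*} [NonUnitalCStarAlgebra A] {Ainf : Type*} [NonUnitalCStarAlgebra Ainf]
variable (π : (ℕ →ᵇ A) →⋆ₙₐ[ℂ] Ainf)

lemma seqConst_def (a : A) :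
    seqConst π a = π (BoundedContinuousFunction.const ℕ a) := rfl

lemma seqConst_mul' (a b : A) : seqConst π (a * b) = seqConst π a * seqConst π b := by
  have h : BoundedContinuousFunction.const ℕ (a * b)
      = BoundedContinuousFunction.const ℕ a * BoundedContinuousFunction.const ℕ b := by
    ext n; simp
  rw [seqConst, seqConst, seqConst, h, map_mul]

lemma seqConst_sub' (a b : A) : seqConst π (a - b) = seqConst π a - seqConst π b := by
  have h : BoundedContinuousFunction.const ℕ (a - b)
      = BoundedContinuousFunction.const ℕ a - BoundedContinuousFunction.const ℕ b := by
    ext n; simp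
  rw [seqConst, seqConst, seqConst, h, map_sub]

lemma seqConst_add' (a b : A) : seqConst π (a + b) = seqConst π a + seqConst π b := by
  have h : BoundedContinuousFunction.const ℕ (a + b)
      = BoundedContinuousFunction.const ℕ a + BoundedContinuousFunction.const ℕ b := by
    ext n; simp
  rw [seqConst, seqConst, seqConst, h, map_add]

lemma seqConst_zero' : seqConst π (0 : A) = 0 := by
  have h : BoundedContinuousFunction.const ℕ (0 : A) = 0 := by
    ext n; simp
  rw [seqConst, h, map_zero]

lemma seqConst_neg' (a : A) : seqConst π (-a) = - seqConst π a := by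
  have := seqConst_sub' π 0 a
  simpa [seqConst_zero'] using this

lemma seqConst_lipschitz : LipschitzWith 1 (seqConst π) := by
  refine LipschitzWith.of_dist_le_mul fun a b => ?_
  rw [dist_eq_norm, dist_eq_norm, ← seqConst_sub', NNReal.coe_one, one_mul, seqConst]
  calc ‖π (BoundedContinuousFunction.const ℕ (a - b))‖
      ≤ ‖BoundedContinuousFunction.const ℕ (a - b)‖ :=
        NonUnitalStarAlgHom.norm_apply_le π _
    _ ≤ ‖a - b‖ := BoundedContinuousFunction.norm_const_le _

lemma seqConst_continuous : Continuous (seqConst π) :=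
  (seqConst_lipschitz π).continuous

lemma mem_seqD_gen (a b : A) (x : Ainf) : seqConst π a * x * seqConst π b ∈ seqD π :=
  subset_closure (Submodule.subset_span ⟨a, b, x, rfl⟩)

lemma seqD_mul_left_eq {v w : Ainf} (hv : ∀ a : A, v * seqConst π a = w * seqConst π a) :
    ∀ d ∈ seqD π, v * d = w * d := by
  intro d hd
  have hsub : (Submodule.span ℂ
      {z : Ainf | ∃ (a b : A) (x : Ainf), z = seqConst π a * x * seqConst π b} : Set Ainf)
      ⊆ {d : Ainf | v * d = w * d} := by
    intro z hz
    induction hz using Submodule.span_induction with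
    | mem z hzmem =>
      obtain ⟨a, b, x, rfl⟩ := hzmem
      show v * _ = w * _
      simp only [← mul_assoc]
      rw [hv]
    | zero => simp
    | add x y hx hy ihx ihy =>
      show v * (x + y) = w * (x + y)
      rw [mul_add, mul_add, ihx, ihy]
    | smul c x hx ihx =>
      show v * (c • x) = w * (c • x)
      rw [mul_smul_comm, mul_smul_comm, ihx]
  exact closure_minimal hsub
    (isClosed_eq (continuous_const.mul continuous_id) (continuous_const.mul continuous_id)) hd

lemma seqD_mul_right_eq {v w : Ainf} (hv : ∀ a : A, seqConst π a * v = seqConst π a * w) :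
    ∀ d ∈ seqD π, d * v = d * w := by
  intro d hd
  have hsub : (Submodule.span ℂ
      {z : Ainf | ∃ (a b : A) (x : Ainf), z = seqConst π a * x * seqConst π b} : Set Ainf)
      ⊆ {d : Ainf | d * v = d * w} := by
    intro z hz
    induction hz using Submodule.span_induction with
    | mem z hzmem =>
      obtain ⟨a, b, x, rfl⟩ := hzmem
      show _ * v = _ * w
      simp only [mul_assoc]
      rw [hv]
    | zero => simp
    | add x y hx hy ihx ihy =>
      show (x + y) * v = (x + y) * w
      rw [add_mul, add_mul, ihx, ihy]
    | smul c x hx ihx =>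
      show (c • x) * v = (c • x) * w
      rw [smul_mul_assoc, smul_mul_assoc, ihx]
  exact closure_minimal hsub
    (isClosed_eq (continuous_id.mul continuous_const) (continuous_id.mul continuous_const)) hd

lemma seqD_mul_left_id {v : Ainf} (hv : ∀ a : A, v * seqConst π a = seqConst π a) :
    ∀ d ∈ seqD π, v * d = d := by
  intro d hd
  have hsub : (Submodule.span ℂ
      {z : Ainf | ∃ (a b : A) (x : Ainf), z = seqConst π a * x * seqConst π b} : Set Ainf)
      ⊆ {d : Ainf | v * d = d} := by
    intro z hz
    induction hz using Submodule.span_induction with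
    | mem z hzmem =>
      obtain ⟨a, b, x, rfl⟩ := hzmem
      show v * _ = _
      simp only [← mul_assoc]
      rw [hv]
    | zero => simp
    | add x y hx hy ihx ihy =>
      show v * (x + y) = x + y
      rw [mul_add, ihx, ihy]
    | smul c x hx ihx =>
      show v * (c • x) = c • x
      rw [mul_smul_comm, ihx]
  exact closure_minimal hsub
    (isClosed_eq (continuous_const.mul continuous_id) continuous_id) hd

lemma seqD_mul_right_id {v : Ainf} (hv : ∀ a : A, seqConst π a * v = seqConst π a) :
    ∀ d ∈ seqD π, d * v = d := by
  intro d hd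
  have hsub : (Submodule.span ℂ
      {z : Ainf | ∃ (a b : A) (x : Ainf), z = seqConst π a * x * seqConst π b} : Set Ainf)
      ⊆ {d : Ainf | d * v = d} := by
    intro z hz
    induction hz using Submodule.span_induction with
    | mem z hzmem =>
      obtain ⟨a, b, x, rfl⟩ := hzmem
      show _ * v = _
      simp only [mul_assoc]
      rw [hv]
    | zero => simp
    | add x y hx hy ihx ihy =>
      show (x + y) * v = x + y
      rw [add_mul, ihx, ihy]
    | smul c x hx ihx =>
      show (c • x) * v = c • x
      rw [smul_mul_assoc, ihx]
  exact closure_minimal hsub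
    (isClosed_eq (continuous_id.mul continuous_const) continuous_id) hd

lemma seqD_mul_left_zero {v : Ainf} (hv : ∀ a : A, v * seqConst π a = 0) :
    ∀ d ∈ seqD π, v * d = 0 := by
  intro d hd
  have := seqD_mul_left_eq π (w := 0) (fun a => by rw [hv a, zero_mul]) d hd
  simpa using this

lemma seqD_mul_right_zero {v : Ainf} (hv : ∀ a : A, seqConst π a * v = 0) :
    ∀ d ∈ seqD π, d * v = 0 := by
  intro d hd
  have := seqD_mul_right_eq π (w := 0) (fun a => by rw [hv a, mul_zero]) d hd
  simpa using this

lemma seqD_const_mul_mem (w : A) {d : Ainf} (hd : d ∈ seqD π) :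
    seqConst π w * d ∈ seqD π := by
  set S : Set Ainf := {z : Ainf | ∃ (a b : A) (x : Ainf), z = seqConst π a * x * seqConst π b}
    with hS
  have hspan : ∀ z ∈ (Submodule.span ℂ S : Set Ainf),
      seqConst π w * z ∈ (Submodule.span ℂ S : Set Ainf) := by
    intro z hz
    induction hz using Submodule.span_induction with
    | mem z hzmem =>
      obtain ⟨a, b, x, rfl⟩ := hzmem
      refine Submodule.subset_span ⟨w * a, b, x, ?_⟩
      rw [seqConst_mul']
      simp only [mul_assoc]
    | zero => simpa using Submodule.zero_mem _
    | add x y hx hy ihx ihy =>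
      rw [mul_add]
      exact Submodule.add_mem _ ihx ihy
    | smul c x hx ihx =>
      rw [mul_smul_comm]
      exact Submodule.smul_mem _ _ ihx
  have hcont : Continuous fun z : Ainf => seqConst π w * z := continuous_const.mul continuous_id
  have : seqConst π w * d ∈ closure ((fun z : Ainf => seqConst π w * z) ''
      (Submodule.span ℂ S : Set Ainf)) := by
    apply (image_closure_subset_closure_image hcont)
    exact ⟨d, hd, rfl⟩
  refine closure_mono ?_ this
  rintro _ ⟨z, hz, rfl⟩
  exact hspan z hz

lemma seqD_mul_const_mem (w : A) {d : Ainf} (hd : d ∈ seqD π) :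
    d * seqConst π w ∈ seqD π := by
  set S : Set Ainf := {z : Ainf | ∃ (a b : A) (x : Ainf), z = seqConst π a * x * seqConst π b}
    with hS
  have hspan : ∀ z ∈ (Submodule.span ℂ S : Set Ainf),
      z * seqConst π w ∈ (Submodule.span ℂ S : Set Ainf) := by
    intro z hz
    induction hz using Submodule.span_induction with
    | mem z hzmem =>
      obtain ⟨a, b, x, rfl⟩ := hzmem
      refine Submodule.subset_span ⟨a, b * w, x, ?_⟩
      rw [seqConst_mul']
      simp only [mul_assoc]
    | zero => simpa using Submodule.zero_mem _
    | add x y hx hy ihx ihy =>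
      rw [add_mul]
      exact Submodule.add_mem _ ihx ihy
    | smul c x hx ihx =>
      rw [smul_mul_assoc]
      exact Submodule.smul_mem _ _ ihx
  have hcont : Continuous fun z : Ainf => z * seqConst π w := continuous_id.mul continuous_const
  have : d * seqConst π w ∈ closure ((fun z : Ainf => z * seqConst π w) ''
      (Submodule.span ℂ S : Set Ainf)) := by
    apply (image_closure_subset_closure_image hcont)
    exact ⟨d, hd, rfl⟩
  refine closure_mono ?_ this
  rintro _ ⟨z, hz, rfl⟩
  exact hspan z hz

end AuxLemmas

/-- The coordinatewise application of a `⋆`-algebra automorphism to a bounded sequence. -/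
noncomputable def mapBCF {A : Type*} [NonUnitalCStarAlgebra A] (φ : A ≃⋆ₐ[ℂ] A)
    (f : ℕ →ᵇ A) : ℕ →ᵇ A where
  toFun := fun n => φ (f n)
  continuous_toFun := continuous_of_discreteTopology
  map_bounded' := by
    obtain ⟨C, hC⟩ := f.map_bounded'
    refine ⟨C, fun x y => ?_⟩
    calc dist (φ (f x)) (φ (f y)) = ‖φ (f x) - φ (f y)‖ := dist_eq_norm _ _
      _ = ‖φ (f x - f y)‖ := by rw [map_sub]
      _ = ‖f x - f y‖ := StarAlgEquiv.norm_map φ _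
      _ = dist (f x) (f y) := (dist_eq_norm _ _).symm
      _ ≤ C := hC x y

@[simp] lemma mapBCF_apply {A : Type*} [NonUnitalCStarAlgebra A] (φ : A ≃⋆ₐ[ℂ] A)
    (f : ℕ →ᵇ A) (n : ℕ) : mapBCF φ f n = φ (f n) := rfl

set_option maxHeartbeats 1000000 in
theorem rokhlin_condExp_of_nawata_rokhlin {G : Type*} [Group G] [Fintype G]
    {A Ainf : Type*} [NonUnitalCStarAlgebra A] [NonUnitalCStarAlgebra Ainf]
    -- `A` is a σ-unital simple C⋆-algebra
    (hAσ : IsSigmaUnital A) (hsimple : IsSimpleCStarAlgebra A)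
    -- `α` is an action of the finite group `G` on `A`
    (α : G → A ≃⋆ₐ[ℂ] A) (hα1 : ∀ x : A, α 1 x = x)
    (hαmul : ∀ (g h : G) (x : A), α (g * h) x = α g (α h x))
    -- `Ainf` is the sequence algebra `A^∞`, `αinf` the coordinatewise extension of `α`
    (π : (ℕ →ᵇ A) →⋆ₙₐ[ℂ] Ainf) (hπ : IsSequenceAlgebra π)
    (αinf : G → Ainf → Ainf) (hαinf : IsInducedAction π α αinf)
    -- `Einf` is the coordinatewise extension of the canonical conditional expectation
    -- `E : A → A^α`, `E(x) = (1/|G|) ∑ g, α_g(x)`, onto the fixed point algebra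
    (Einf : Ainf → Ainf)
    (hEinf : ∀ f h : ℕ →ᵇ A,
      (∀ n, h n = (Fintype.card G : ℂ)⁻¹ • ∑ g : G, α g (f n)) → Einf (π f) = π h)
    -- `α` has the Rokhlin property in the sense of Nawata
    (hNawata : NawataRokhlin π α αinf) :
    -- the canonical conditional expectation has the Rokhlin property; here the
    -- Izumi–Watatani index of `E` is `|G|`
    ∃ e : Ainf, IsRokhlinElement π Einf (Fintype.card G : ℝ) e := by
  classical
  obtain ⟨eN, hcomm, hsaN, hidem, hsumN, hequiv⟩ := hNawata
  obtain ⟨hsurj, hker⟩ := hπ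
  set u : Ainf := eN 1 with hu
  have comm_u : ∀ a : A, u * seqConst π a = seqConst π a * u := fun a => hcomm 1 a
  have star_u : ∀ a : A, star u * seqConst π a = u * seqConst π a := by
    intro a; have h := (hsaN 1 a).1; rwa [sub_mul, sub_eq_zero] at h
  have star_u' : ∀ a : A, seqConst π a * star u = seqConst π a * u := by
    intro a; have h := (hsaN 1 a).2; rwa [mul_sub, sub_eq_zero] at h
  have sq_u : ∀ a : A, (u * u) * seqConst π a = u * seqConst π a := by
    intro a; have h := (hidem 1 a).1; rwa [sub_mul, sub_eq_zero] at h
  have sq_u' : ∀ a : A, seqConst π a * (u * u) = seqConst π a * u := by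
    intro a; have h := (hidem 1 a).2; rwa [mul_sub, sub_eq_zero] at h
  clear_value u
  set s : Ainf := star u * u with hs
  have hsa_s : IsSelfAdjoint s := hs ▸ IsSelfAdjoint.star_mul_self u
  clear_value s
  have s_Ca : ∀ a : A, s * seqConst π a = seqConst π a * u := by
    intro a
    calc s * seqConst π a = star u * (u * seqConst π a) := by rw [hs, mul_assoc]
      _ = star u * (seqConst π a * u) := by rw [comm_u]
      _ = (star u * seqConst π a) * u := (mul_assoc _ _ u).symm
      _ = (u * seqConst π a) * u := by rw [star_u]
      _ = (seqConst π a * u) * u := by rw [comm_u]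
      _ = seqConst π a * (u * u) := mul_assoc _ u u
      _ = seqConst π a * u := sq_u' a
  have Ca_s : ∀ a : A, seqConst π a * s = seqConst π a * u := by
    intro a
    calc seqConst π a * s = (seqConst π a * star u) * u := by rw [hs, ← mul_assoc]
      _ = (seqConst π a * u) * u := by rw [star_u']
      _ = seqConst π a * (u * u) := mul_assoc _ u u
      _ = seqConst π a * u := sq_u' a
  have s2_Ca : ∀ a : A, (s * s) * seqConst π a = seqConst π a * u := by
    intro a
    calc (s * s) * seqConst π a = s * (s * seqConst π a) := mul_assoc s s _
      _ = s * (seqConst π a * u) := by rw [s_Ca]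
      _ = (s * seqConst π a) * u := (mul_assoc s _ u).symm
      _ = (seqConst π a * u) * u := by rw [s_Ca]
      _ = seqConst π a * (u * u) := mul_assoc _ u u
      _ = seqConst π a * u := sq_u' a
  have Ca_s2 : ∀ a : A, seqConst π a * (s * s) = seqConst π a * u := by
    intro a
    calc seqConst π a * (s * s) = (seqConst π a * s) * s := (mul_assoc _ s s).symm
      _ = (seqConst π a * u) * s := by rw [Ca_s]
      _ = (u * seqConst π a) * s := by rw [comm_u]
      _ = u * (seqConst π a * s) := mul_assoc u _ s
      _ = u * (seqConst π a * u) := by rw [Ca_s]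
      _ = u * (u * seqConst π a) := by rw [comm_u]
      _ = (u * u) * seqConst π a := (mul_assoc u u _).symm
      _ = u * seqConst π a := sq_u a
      _ = seqConst π a * u := comm_u a
  have hssZ : ∀ a : A, (s * s - s) * seqConst π a = 0 := by
    intro a; rw [sub_mul, s2_Ca, s_Ca, sub_self]
  have hssZ' : ∀ a : A, seqConst π a * (s * s - s) = 0 := by
    intro a; rw [mul_sub, Ca_s2, Ca_s, sub_self]
  -- the continuous functional calculus construction of the Rokhlin positive contraction
  set φf : ℝ → ℝ := fun t => 2 * t / (1 + t ^ 2) with hφf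
  set q0 : ℝ → ℝ := fun t => -(t * (t + 1) * (t ^ 2 + 3)) / (1 + t ^ 2) ^ 2 with hq0
  have hφf_cont : Continuous φf := by
    rw [hφf]
    exact Continuous.div (by fun_prop) (by fun_prop) (fun t => by positivity)
  have hq0_cont : Continuous q0 := by
    rw [hq0]
    exact Continuous.div (by fun_prop) (by fun_prop) (fun t => by positivity)
  have hφf0 : φf 0 = 0 := by simp [hφf]
  have hq00 : q0 0 = 0 := by simp [hq0]
  set v : Ainf := cfcₙ φf s with hv
  have hv_sa : IsSelfAdjoint v := by rw [hv]; exact cfcₙ_predicate φf s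

  set e : Ainf := v * v with he
  clear_value v
  clear_value e
  have he_cfc : e = cfcₙ (fun t => φf t * φf t) s := by
    rw [he, hv, ← cfcₙ_mul φf φf s hφf_cont.continuousOn hφf0 hφf_cont.continuousOn hφf0]
  have hTT : cfcₙ (fun t : ℝ => t * t - t) s = s * s - s := by
    rw [cfcₙ_sub (fun t : ℝ => t * t) (fun t : ℝ => t) s (by fun_prop) (by simp) (by fun_prop)
        rfl,
      cfcₙ_mul (fun t : ℝ => t) (fun t : ℝ => t) s (by fun_prop) rfl (by fun_prop) rfl,
      cfcₙ_id' ℝ s hsa_s]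
  have hsub1 : cfcₙ (fun t : ℝ => φf t * φf t - t) s = e - s := by
    rw [cfcₙ_sub (fun t : ℝ => φf t * φf t) (fun t : ℝ => t) s
        (hφf_cont.mul hφf_cont).continuousOn (by simp [hφf0]) (by fun_prop) rfl,
      cfcₙ_id' ℝ s hsa_s, ← he_cfc]
  have key_fun1 : (fun t : ℝ => φf t * φf t - t)
      = (fun t : ℝ => q0 t * (t * t - t) + (t * t - t)) := by
    funext t
    have h1 : (1 : ℝ) + t ^ 2 ≠ 0 := by positivity
    rw [hφf, hq0]
    field_simp
    ring
  have key_fun2 : (fun t : ℝ => φf t * φf t - t)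
      = (fun t : ℝ => (t * t - t) * q0 t + (t * t - t)) := by
    funext t
    have h1 : (1 : ℝ) + t ^ 2 ≠ 0 := by positivity
    rw [hφf, hq0]
    field_simp
    ring
  have key1 : e - s = cfcₙ q0 s * (s * s - s) + (s * s - s) := by
    rw [← hsub1, key_fun1,
      cfcₙ_add (fun t : ℝ => q0 t * (t * t - t)) (fun t : ℝ => t * t - t) s
        (hq0_cont.mul (by fun_prop)).continuousOn (by simp [hq00]) (by fun_prop) (by simp),
      cfcₙ_mul q0 (fun t : ℝ => t * t - t) s hq0_cont.continuousOn hq00 (by fun_prop) (by simp),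
      hTT]
  have key2 : e - s = (s * s - s) * cfcₙ q0 s + (s * s - s) := by
    rw [← hsub1, key_fun2,
      cfcₙ_add (fun t : ℝ => (t * t - t) * q0 t) (fun t : ℝ => t * t - t) s
        ((Continuous.mul (by fun_prop) hq0_cont)).continuousOn (by simp [hq00]) (by fun_prop)
        (by simp),
      cfcₙ_mul (fun t : ℝ => t * t - t) q0 s (by fun_prop) (by simp) hq0_cont.continuousOn hq00,
      hTT]
  have es_Ca : ∀ a : A, (e - s) * seqConst π a = 0 := by
    intro a
    rw [key1, add_mul, mul_assoc, hssZ, mul_zero, add_zero]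
  have Ca_es : ∀ a : A, seqConst π a * (e - s) = 0 := by
    intro a
    rw [key2, mul_add, ← mul_assoc, hssZ', zero_mul, add_zero]
  have e_Ca : ∀ a : A, e * seqConst π a = seqConst π a * u := by
    intro a
    have h := es_Ca a
    rw [sub_mul, sub_eq_zero] at h
    rw [h, s_Ca]
  have Ca_e : ∀ a : A, seqConst π a * e = seqConst π a * u := by
    intro a
    have h := Ca_es a
    rw [mul_sub, sub_eq_zero] at h
    rw [h, Ca_s]
  have comm_e : ∀ a : A, e * seqConst π a = seqConst π a * e := by
    intro a; rw [e_Ca, Ca_e]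
  have idem2 : ∀ a : A, (e * e) * seqConst π a = seqConst π a * u := by
    intro a
    calc (e * e) * seqConst π a = e * (e * seqConst π a) := mul_assoc e e _
      _ = e * (seqConst π a * u) := by rw [e_Ca]
      _ = (e * seqConst π a) * u := (mul_assoc e _ u).symm
      _ = (seqConst π a * u) * u := by rw [e_Ca]
      _ = seqConst π a * (u * u) := mul_assoc _ u u
      _ = seqConst π a * u := sq_u' a
  have idem2' : ∀ a : A, seqConst π a * (e * e) = seqConst π a * u := by
    intro a
    calc seqConst π a * (e * e) = (seqConst π a * e) * e := (mul_assoc _ e e).symm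
      _ = (seqConst π a * u) * e := by rw [Ca_e]
      _ = (u * seqConst π a) * e := by rw [comm_u]
      _ = u * (seqConst π a * e) := mul_assoc u _ e
      _ = u * (seqConst π a * u) := by rw [Ca_e]
      _ = u * (u * seqConst π a) := by rw [comm_u]
      _ = (u * u) * seqConst π a := (mul_assoc u u _).symm
      _ = u * seqConst π a := sq_u a
      _ = seqConst π a * u := comm_u a
  have idemZ : ∀ a : A, (e * e - e) * seqConst π a = 0 := by
    intro a; rw [sub_mul, idem2, e_Ca, sub_self]
  have idemZ' : ∀ a : A, seqConst π a * (e * e - e) = 0 := by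
    intro a; rw [mul_sub, idem2', Ca_e, sub_self]
  -- positivity and norm bound
  have he_pos : IsPositiveElem e := ⟨v, by rw [hv_sa.star_eq]; exact he⟩
  have hnorm : ‖e‖ ≤ 1 := by
    rw [he_cfc]
    refine norm_cfcₙ_le fun x _ => ?_
    have h1 : (0 : ℝ) < 1 + x ^ 2 := by positivity
    have h2 : |φf x| ≤ 1 := by
      simp only [hφf]
      rw [abs_div, abs_of_pos h1, div_le_one h1]
      have habs : |2 * x| = 2 * |x| := by rw [abs_mul, abs_two]
      rw [habs]
      nlinarith [sq_abs x, abs_nonneg x, sq_nonneg (|x| - 1)]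
    rw [Real.norm_eq_abs, abs_mul]
    nlinarith [abs_nonneg (φf x)]
  -- the expectation identities
  obtain ⟨F, hF⟩ := hsurj e
  obtain ⟨U, hU⟩ := hsurj u
  have hαe : ∀ g : G, αinf g e = π (mapBCF (α g) F) := fun g => by
    rw [← hF]; exact hαinf g F (mapBCF (α g) F) (fun n => rfl)
  have hαu : ∀ g : G, αinf g u = π (mapBCF (α g) U) := fun g => by
    rw [← hU]; exact hαinf g U (mapBCF (α g) U) (fun n => rfl)
  have diff_l : ∀ b : A, (e - u) * seqConst π b = 0 := by
    intro b
    rw [sub_mul, sub_eq_zero, e_Ca]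
    exact (comm_u b).symm
  have diff_r : ∀ b : A, seqConst π b * (e - u) = 0 := by
    intro b
    rw [mul_sub, sub_eq_zero]
    exact Ca_e b
  have stepA_l : ∀ (g : G) (a : A),
      αinf g e * seqConst π a = αinf g u * seqConst π a := by
    intro g a
    rw [hαe, hαu, ← sub_eq_zero, ← sub_mul, ← map_sub]
    have hfactor : (mapBCF (α g) F - mapBCF (α g) U) = mapBCF (α g) (F - U) := by
      ext n
      simp only [BoundedContinuousFunction.coe_sub, Pi.sub_apply, mapBCF_apply, map_sub]
    rw [hfactor, seqConst_def, ← map_mul, hker]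
    set b : A := (α g).symm a with hb
    have h0 : Tendsto (fun n => (F n - U n) * b) atTop (𝓝 0) := by
      have hπ0 : π ((F - U) * BoundedContinuousFunction.const ℕ b) = 0 := by
        rw [map_mul, map_sub, hF, hU]
        exact diff_l b
      have := (hker _).1 hπ0
      simpa using this
    rw [tendsto_zero_iff_norm_tendsto_zero]
    have heq : ∀ n : ℕ,
        ‖(mapBCF (α g) (F - U) * BoundedContinuousFunction.const ℕ a) n‖
          = ‖(F n - U n) * b‖ := by
      intro n
      have : (mapBCF (α g) (F - U) * BoundedContinuousFunction.const ℕ a) n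
          = α g ((F n - U n) * b) := by
        simp [map_mul, hb]
      rw [this, StarAlgEquiv.norm_map]
    have h0' := tendsto_zero_iff_norm_tendsto_zero.mp h0
    convert h0' using 1
    funext n
    exact heq n
  have stepA_r : ∀ (g : G) (a : A),
      seqConst π a * αinf g e = seqConst π a * αinf g u := by
    intro g a
    rw [hαe, hαu, ← sub_eq_zero, ← mul_sub, ← map_sub]
    have hfactor : (mapBCF (α g) F - mapBCF (α g) U) = mapBCF (α g) (F - U) := by
      ext n
      simp only [BoundedContinuousFunction.coe_sub, Pi.sub_apply, mapBCF_apply, map_sub]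
    rw [hfactor, seqConst_def, ← map_mul, hker]
    set b : A := (α g).symm a with hb
    have h0 : Tendsto (fun n => b * (F n - U n)) atTop (𝓝 0) := by
      have hπ0 : π (BoundedContinuousFunction.const ℕ b * (F - U)) = 0 := by
        rw [map_mul, map_sub, hF, hU]
        exact diff_r b
      have := (hker _).1 hπ0
      simpa using this
    rw [tendsto_zero_iff_norm_tendsto_zero]
    have heq : ∀ n : ℕ,
        ‖(BoundedContinuousFunction.const ℕ a * mapBCF (α g) (F - U)) n‖
          = ‖b * (F n - U n)‖ := by
      intro n
      have : (BoundedContinuousFunction.const ℕ a * mapBCF (α g) (F - U)) n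
          = α g (b * (F n - U n)) := by
        simp [map_mul, hb]
      rw [this, StarAlgEquiv.norm_map]
    have h0' := tendsto_zero_iff_norm_tendsto_zero.mp h0
    convert h0' using 1
    funext n
    exact heq n
  have stepB_l : ∀ (g : G) (a : A),
      αinf g u * seqConst π a = eN g * seqConst π a := by
    intro g a
    have h := (hequiv g 1 a).1
    rw [mul_one, ← hu] at h
    rwa [sub_mul, sub_eq_zero] at h
  have stepB_r : ∀ (g : G) (a : A),
      seqConst π a * αinf g u = seqConst π a * eN g := by
    intro g a
    have h := (hequiv g 1 a).2
    rw [mul_one, ← hu] at h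
    rwa [mul_sub, sub_eq_zero] at h
  have hsum_e_l : ∀ a : A, (∑ g : G, αinf g e) * seqConst π a = seqConst π a := by
    intro a
    rw [Finset.sum_mul]
    have hterm : ∀ g : G, αinf g e * seqConst π a = eN g * seqConst π a := fun g => by
      rw [stepA_l g a, stepB_l g a]
    simp_rw [hterm]
    rw [← Finset.sum_mul, (hsumN a).1]
  have hsum_e_r : ∀ a : A, seqConst π a * (∑ g : G, αinf g e) = seqConst π a := by
    intro a
    rw [Finset.mul_sum]
    have hterm : ∀ g : G, seqConst π a * αinf g e = seqConst π a * eN g := fun g => by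
      rw [stepA_r g a, stepB_r g a]
    simp_rw [hterm]
    rw [← Finset.mul_sum, (hsumN a).2]
  have hEinfEq : (Fintype.card G : ℝ) • Einf e = ∑ g : G, αinf g e := by
    have hcard : (Fintype.card G : ℂ) ≠ 0 := Nat.cast_ne_zero.mpr Fintype.card_ne_zero
    have hE : Einf e = π ((Fintype.card G : ℂ)⁻¹ • ∑ g : G, mapBCF (α g) F) := by
      rw [← hF]
      refine hEinf F _ fun n => ?_
      rw [BoundedContinuousFunction.coe_smul]
      simp [BoundedContinuousFunction.coe_sum, Finset.sum_apply]
    rw [hE, ← Complex.coe_smul, ← map_smul, smul_smul, Complex.ofReal_natCast,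
      mul_inv_cancel₀ hcard, one_smul, map_sum]
    exact Finset.sum_congr rfl fun g _ => (hαe g).symm
  -- assemble the Rokhlin element
  refine ⟨e, he_pos, hnorm, comm_e, ?_, ?_, ?_⟩
  · intro d hd
    exact ⟨seqD_mul_left_zero π idemZ d hd, seqD_mul_right_zero π idemZ' d hd⟩
  · intro d hd
    rw [hEinfEq]
    exact ⟨seqD_mul_left_id π hsum_e_l d hd, seqD_mul_right_id π hsum_e_r d hd⟩
  · -- injectivity, using simplicity of `A`
    intro x y hxy
    have hmove : ∀ (w : Ainf) (a : A),
        w * e * seqConst π a = w * seqConst π a * e := by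
      intro w a
      rw [mul_assoc, comm_e a, ← mul_assoc]
    have he2r : ∀ (w : Ainf) (a : A),
        w * e * e * seqConst π a = w * e * seqConst π a := by
      intro w a
      have h2e : (e * e) * seqConst π a = e * seqConst π a := by rw [idem2, e_Ca]
      rw [mul_assoc w e e, mul_assoc w (e * e) (seqConst π a), h2e, ← mul_assoc]
    set Jset : Set A :=
      {z : A | ∀ d ∈ seqD π, (seqConst π z * e) * d = 0 ∧ d * (seqConst π z * e) = 0}
      with hJset
    have hJ0 : (0 : A) ∈ Jset := by
      intro d hd
      rw [seqConst_zero']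
      simp
    have hJadd : ∀ {z w : A}, z ∈ Jset → w ∈ Jset → z + w ∈ Jset := by
      intro z w hz hw d hd
      rw [seqConst_add', add_mul, add_mul]
      constructor
      · rw [(hz d hd).1, (hw d hd).1, add_zero]
      · rw [mul_add, (hz d hd).2, (hw d hd).2, add_zero]
    have hJneg : ∀ {z : A}, z ∈ Jset → -z ∈ Jset := by
      intro z hz d hd
      rw [seqConst_neg', neg_mul, neg_mul]
      constructor
      · rw [(hz d hd).1, neg_zero]
      · rw [mul_neg, (hz d hd).2, neg_zero]
    have hJmul_left : ∀ {w z : A}, z ∈ Jset → w * z ∈ Jset := by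
      intro w z hz d hd
      rw [seqConst_mul']
      constructor
      · rw [mul_assoc (seqConst π w) (seqConst π z) e,
          mul_assoc (seqConst π w) (seqConst π z * e) d, (hz d hd).1, mul_zero]
      · rw [mul_assoc (seqConst π w) (seqConst π z) e, ← mul_assoc d (seqConst π w) _]
        exact (hz _ (seqD_mul_const_mem π w hd)).2
    have hJmul_right : ∀ {z w : A}, z ∈ Jset → z * w ∈ Jset := by
      intro z w hz d hd
      have hrw : seqConst π (z * w) * e = (seqConst π z * e) * seqConst π w := by
        rw [seqConst_mul', mul_assoc, ← comm_e w, ← mul_assoc]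
      constructor
      · rw [hrw, mul_assoc]
        exact (hz _ (seqD_const_mul_mem π w hd)).1
      · rw [hrw, ← mul_assoc, (hz d hd).2, zero_mul]
    have hJclosed : IsClosed Jset := by
      have hJeq : Jset = ⋂ (d : Ainf) (_ : d ∈ seqD π),
          ({z : A | (seqConst π z * e) * d = 0} ∩ {z : A | d * (seqConst π z * e) = 0}) := by
        ext z
        simp only [hJset, Set.mem_setOf_eq, Set.mem_iInter, Set.mem_inter_iff]
      rw [hJeq]
      refine isClosed_iInter fun d => isClosed_iInter fun hd => IsClosed.inter ?_ ?_
      · exact isClosed_eq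
          (((seqConst_continuous π).mul continuous_const).mul continuous_const)
          continuous_const
      · exact isClosed_eq
          (continuous_const.mul ((seqConst_continuous π).mul continuous_const))
          continuous_const
    set J : TwoSidedIdeal A := TwoSidedIdeal.mk' Jset hJ0 hJadd hJneg hJmul_left hJmul_right
      with hJ
    have hJcoe : (J : Set A) = Jset := TwoSidedIdeal.coe_mk' _ _ _ _ _ _
    rcases hsimple.2 J (by rw [hJcoe]; exact hJclosed) with hbot | htop
    · -- x = y
      have hxyJ : x - y ∈ Jset := by
        intro d hd
        have h := hxy d hd
        rw [seqConst_sub', sub_mul]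
        exact h
      have hmem : x - y ∈ J := by
        rw [hJ]
        exact (TwoSidedIdeal.mem_mk' _ _ _ _ _ _ _).2 hxyJ
      rw [hbot] at hmem
      exact sub_eq_zero.1 ((TwoSidedIdeal.mem_bot A).1 hmem)
    · -- contradiction with `A ≠ 0`
      exfalso
      have hall : ∀ z : A, z ∈ Jset := by
        intro z
        have hz : z ∈ J := by rw [htop]; exact TwoSidedIdeal.mem_top A
        rw [hJ] at hz
        exact (TwoSidedIdeal.mem_mk' _ _ _ _ _ _ _).1 hz
      have h1 : ∀ z a b : A, seqConst π (z * a) * (e * seqConst π b) = 0 := by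
        intro z a b
        have hd : seqConst π a * e * seqConst π b ∈ seqD π := mem_seqD_gen π a b e
        have h := (hall z _ hd).1
        simp only [← mul_assoc] at h
        rw [hmove (seqConst π z) a, he2r (seqConst π z * seqConst π a) b,
          ← seqConst_mul' π z a, mul_assoc] at h
        exact h
      have h2 : ∀ (g : G) (z a b : A),
          seqConst π (α g z * α g a) * (π (mapBCF (α g) F) * seqConst π (α g b)) = 0 := by
        intro g z a b
        set W : ℕ →ᵇ A := BoundedContinuousFunction.const ℕ (z * a)
          * (F * BoundedContinuousFunction.const ℕ b) with hWdef
        have hW : π W = 0 := by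
          rw [hWdef, map_mul, map_mul, hF]
          exact h1 z a b
        have hαW : αinf g (π W) = π (mapBCF (α g) W) :=
          hαinf g W (mapBCF (α g) W) (fun n => rfl)
        have hzero : αinf g (0 : Ainf) = 0 := by
          calc αinf g 0 = αinf g (π 0) := by rw [map_zero]
            _ = π (mapBCF (α g) 0) := hαinf g 0 _ (fun n => rfl)
            _ = π 0 := by
                congr 1
                ext n
                simp
            _ = 0 := map_zero π
        have hπmap : π (mapBCF (α g) W) = 0 := by
          rw [← hαW, hW, hzero]
        have hmap : mapBCF (α g) W
            = BoundedContinuousFunction.const ℕ (α g (z * a))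
              * (mapBCF (α g) F * BoundedContinuousFunction.const ℕ (α g b)) := by
          ext n
          simp [hWdef, map_mul]
        rw [hmap] at hπmap
        simp only [map_mul] at hπmap
        exact hπmap
      have h3 : ∀ (g : G) (z a b : A),
          seqConst π (z * a) * (eN g * seqConst π b) = 0 := by
        intro g z a b
        have h := h2 g ((α g).symm z) ((α g).symm a) ((α g).symm b)
        simp only [StarAlgEquiv.apply_symm_apply] at h
        rw [← hαe g] at h
        rw [stepA_l g b, stepB_l g b] at h
        exact h
      have h4 : ∀ z a b : A, z * a * b = 0 := by
        intro z a b
        have hCzero : seqConst π (z * a * b) = 0 := by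
          rw [seqConst_mul' π (z * a) b]
          calc seqConst π (z * a) * seqConst π b
              = seqConst π (z * a) * ((∑ g : G, eN g) * seqConst π b) := by
                rw [(hsumN b).1]
            _ = ∑ g : G, seqConst π (z * a) * (eN g * seqConst π b) := by
                rw [Finset.sum_mul, Finset.mul_sum]
            _ = 0 := Finset.sum_eq_zero fun g _ => h3 g z a b
        have ht := (hker _).1 hCzero
        have ht' : Tendsto (fun _ : ℕ => z * a * b) atTop (𝓝 0) := by
          simpa using ht
        exact (tendsto_nhds_unique ht' tendsto_const_nhds).symm
      obtain ⟨b0, hb0⟩ := hsimple.1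
      have h5 : b0 * star b0 * b0 = 0 := h4 b0 (star b0) b0
      have h6 : (b0 * star b0) * (b0 * star b0) = 0 := by
        calc (b0 * star b0) * (b0 * star b0)
            = (b0 * star b0 * b0) * star b0 := by simp only [mul_assoc]
          _ = 0 := by rw [h5, zero_mul]
      have h7 : b0 * star b0 = 0 := by
        have hsaB : star (b0 * star b0) = b0 * star b0 := by rw [star_mul, star_star]
        have h8 : ‖b0 * star b0‖ * ‖b0 * star b0‖ = 0 := by
          rw [← CStarRing.norm_self_mul_star, hsaB, h6, norm_zero]
        exact norm_eq_zero.1 (mul_self_eq_zero.1 h8)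
      have h9 : ‖b0‖ * ‖b0‖ = 0 := by
        rw [← CStarRing.norm_self_mul_star, h7, norm_zero]
      exact hb0 (norm_eq_zero.1 (mul_self_eq_zero.1 h9))
end
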